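/- Every deduction in normal form in the system C has the subformula property: every formula occurring in the deduction is a subformula of the conclusion or of one of the undischarged assumptions. -/
import Mathlib

/- Milne's system **C** of classical propositional logic with general
introduction and general elimination rules (Kürbis, "Normalisation and
Subformula Property for a System of Classical Logic with Tarski's Rule").

Formulas are built from atoms by ¬, ∧, ∨, ⊃. -/
inductive Formula : Type
  | atom : ℕ → Formula
  | neg  : Formula → Formula
  | conj : Formula → Formula → Formula
  | disj : Formula → Formula → Formula
  | imp  : Formula → Formula → Formula
  deriving DecidableEq

/-- Raw deduction trees of the system **C**.  Assumption occurrences carry a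
label (natural number) marking their assumption class; each rule that
discharges assumptions records the label(s) of the class(es) it discharges.
Constructor arguments list first the labels, then the formulas figuring in the
rule, then the immediate subdeductions (major premise first for eliminations;
for introductions: the specific premise(s), then the deduction of the
arbitrary premise from the discharged major assumption).

* `ass ℓ A`           : the assumption `A`, in assumption class `ℓ`.
* `andI ℓ A B ΣA ΣB Π` : from `A`, `B` and `C`-from-`[A∧B]^ℓ` infer `C`.
* `andE ℓA ℓB A B M Π` : from `A∧B` and `C`-from-`[A]^ℓA,[B]^ℓB` infer `C`.
* `orI₁ ℓ A B ΣA Π`    : from `A` and `C`-from-`[A∨B]^ℓ` infer `C`.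
* `orI₂ ℓ A B ΣB Π`    : from `B` and `C`-from-`[A∨B]^ℓ` infer `C`.
* `orE ℓA ℓB A B M Π Ξ`: from `A∨B`, `C`-from-`[A]^ℓA`, `C`-from-`[B]^ℓB` infer `C`.
* `impI ℓ A B ΣB Π`    : from `B` and `C`-from-`[A⊃B]^ℓ` infer `C`.
* `tr ℓA ℓAB A B Π Ξ`  : Tarski's Rule: from `C`-from-`[A]^ℓA` and
                         `C`-from-`[A⊃B]^ℓAB` infer `C`.
* `impE ℓ A B M ΣA Π`  : from `A⊃B`, `A` and `C`-from-`[B]^ℓ` infer `C`.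
* `negI ℓA ℓnA A Π Ξ`  : from `C`-from-`[A]^ℓA` and `C`-from-`[¬A]^ℓnA` infer `C`.
* `negE A C M ΣA`      : from `¬A` and `A` infer any `C`. -/
inductive PT : Type
  | ass  : ℕ → Formula → PT
  | andI : ℕ → Formula → Formula → PT → PT → PT → PT
  | andE : ℕ → ℕ → Formula → Formula → PT → PT → PT
  | orI₁ : ℕ → Formula → Formula → PT → PT → PT
  | orI₂ : ℕ → Formula → Formula → PT → PT → PT
  | orE  : ℕ → ℕ → Formula → Formula → PT → PT → PT → PT
  | impI : ℕ → Formula → Formula → PT → PT → PT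
  | tr   : ℕ → ℕ → Formula → Formula → PT → PT → PT
  | impE : ℕ → Formula → Formula → PT → PT → PT → PT
  | negI : ℕ → ℕ → Formula → PT → PT → PT
  | negE : Formula → Formula → PT → PT → PT
  deriving DecidableEq

namespace PT

/-- The conclusion (root formula) of a deduction tree. -/
def concl : PT → Formula
  | .ass _ A => A
  | .andI _ _ _ _ _ r => r.concl
  | .andE _ _ _ _ _ q => q.concl
  | .orI₁ _ _ _ _ q => q.concl
  | .orI₂ _ _ _ _ q => q.concl
  | .orE _ _ _ _ _ q _ => q.concl
  | .impI _ _ _ _ q => q.concl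
  | .tr _ _ _ _ p _ => p.concl
  | .impE _ _ _ _ _ r => r.concl
  | .negI _ _ _ p _ => p.concl
  | .negE _ C _ _ => C

/-- The multiset of open (undischarged) labelled assumptions of a deduction. -/
def openAss : PT → Multiset (ℕ × Formula)
  | .ass ℓ A => {(ℓ, A)}
  | .andI ℓ _ _ p q r =>
      p.openAss + q.openAss + (r.openAss.filter fun z => z.1 ≠ ℓ)
  | .andE ℓA ℓB _ _ p q =>
      p.openAss + (q.openAss.filter fun z => z.1 ≠ ℓA ∧ z.1 ≠ ℓB)
  | .orI₁ ℓ _ _ p q => p.openAss + (q.openAss.filter fun z => z.1 ≠ ℓ)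
  | .orI₂ ℓ _ _ p q => p.openAss + (q.openAss.filter fun z => z.1 ≠ ℓ)
  | .orE ℓA ℓB _ _ p q r =>
      p.openAss + (q.openAss.filter fun z => z.1 ≠ ℓA) +
        (r.openAss.filter fun z => z.1 ≠ ℓB)
  | .impI ℓ _ _ p q => p.openAss + (q.openAss.filter fun z => z.1 ≠ ℓ)
  | .tr ℓA ℓAB _ _ p q =>
      (p.openAss.filter fun z => z.1 ≠ ℓA) + (q.openAss.filter fun z => z.1 ≠ ℓAB)
  | .impE ℓ _ _ p q r =>
      p.openAss + q.openAss + (r.openAss.filter fun z => z.1 ≠ ℓ)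
  | .negI ℓA ℓnA _ p q =>
      (p.openAss.filter fun z => z.1 ≠ ℓA) + (q.openAss.filter fun z => z.1 ≠ ℓnA)
  | .negE _ _ p q => p.openAss + q.openAss

/-- Correctness of a deduction tree: the subdeductions conclude the right
formulas, every open assumption in a discharged class has the form required
by the rule, and (ban on vacuous discharge above arbitrary premises) each
discharge actually discharges at least one assumption occurrence — in `∧E`
at least one of the two classes `[A]`, `[B]` is non-empty, which reflects the
option of discharging only one of the two assumptions. -/
def wf : PT → Prop
  | .ass _ _ => True
  | .andI ℓ A B p q r => p.wf ∧ q.wf ∧ r.wf ∧ p.concl = A ∧ q.concl = B ∧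
      (∀ F, (ℓ, F) ∈ r.openAss → F = Formula.conj A B) ∧
      (ℓ, Formula.conj A B) ∈ r.openAss
  | .andE ℓA ℓB A B p q => p.wf ∧ q.wf ∧ p.concl = Formula.conj A B ∧
      (∀ F, (ℓA, F) ∈ q.openAss → F = A) ∧ (∀ F, (ℓB, F) ∈ q.openAss → F = B) ∧
      ((ℓA, A) ∈ q.openAss ∨ (ℓB, B) ∈ q.openAss)
  | .orI₁ ℓ A B p q => p.wf ∧ q.wf ∧ p.concl = A ∧
      (∀ F, (ℓ, F) ∈ q.openAss → F = Formula.disj A B) ∧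
      (ℓ, Formula.disj A B) ∈ q.openAss
  | .orI₂ ℓ A B p q => p.wf ∧ q.wf ∧ p.concl = B ∧
      (∀ F, (ℓ, F) ∈ q.openAss → F = Formula.disj A B) ∧
      (ℓ, Formula.disj A B) ∈ q.openAss
  | .orE ℓA ℓB A B p q r => p.wf ∧ q.wf ∧ r.wf ∧
      p.concl = Formula.disj A B ∧ q.concl = r.concl ∧
      (∀ F, (ℓA, F) ∈ q.openAss → F = A) ∧ (ℓA, A) ∈ q.openAss ∧
      (∀ F, (ℓB, F) ∈ r.openAss → F = B) ∧ (ℓB, B) ∈ r.openAss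
  | .impI ℓ A B p q => p.wf ∧ q.wf ∧ p.concl = B ∧
      (∀ F, (ℓ, F) ∈ q.openAss → F = Formula.imp A B) ∧
      (ℓ, Formula.imp A B) ∈ q.openAss
  | .tr ℓA ℓAB A B p q => p.wf ∧ q.wf ∧ p.concl = q.concl ∧
      (∀ F, (ℓA, F) ∈ p.openAss → F = A) ∧ (ℓA, A) ∈ p.openAss ∧
      (∀ F, (ℓAB, F) ∈ q.openAss → F = Formula.imp A B) ∧
      (ℓAB, Formula.imp A B) ∈ q.openAss
  | .impE ℓ A B p q r => p.wf ∧ q.wf ∧ r.wf ∧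
      p.concl = Formula.imp A B ∧ q.concl = A ∧
      (∀ F, (ℓ, F) ∈ r.openAss → F = B) ∧ (ℓ, B) ∈ r.openAss
  | .negI ℓA ℓnA A p q => p.wf ∧ q.wf ∧ p.concl = q.concl ∧
      (∀ F, (ℓA, F) ∈ p.openAss → F = A) ∧ (ℓA, A) ∈ p.openAss ∧
      (∀ F, (ℓnA, F) ∈ q.openAss → F = Formula.neg A) ∧
      (ℓnA, Formula.neg A) ∈ q.openAss
  | .negE A _ p q => p.wf ∧ q.wf ∧ p.concl = Formula.neg A ∧ q.concl = A

/-- The set of formulas that occur as undischarged assumptions of a deduction. -/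
def assumptions (d : PT) : Set Formula := {A | ∃ ℓ, (ℓ, A) ∈ d.openAss}

end PT
namespace PT

/-- `openLeafMajor d ℓ G` holds when the deduction `d` contains an application
of an elimination rule whose major premise is an assumption occurrence
`ass ℓ G` that is still open (undischarged) at the root of `d`.  If a rule
below `d` discharges the class `ℓ`, such an occurrence is a formula occurrence
that is both the major premise of an elimination rule and discharged by that
lower rule. -/
def openLeafMajor : PT → ℕ → Formula → Prop
  | .ass _ _, _, _ => False
  | .andI ℓ' _ _ p q r, ℓ, G =>
      p.openLeafMajor ℓ G ∨ q.openLeafMajor ℓ G ∨ (r.openLeafMajor ℓ G ∧ ℓ ≠ ℓ')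
  | .andE ℓA ℓB _ _ p q, ℓ, G =>
      p = .ass ℓ G ∨ p.openLeafMajor ℓ G ∨
        (q.openLeafMajor ℓ G ∧ ℓ ≠ ℓA ∧ ℓ ≠ ℓB)
  | .orI₁ ℓ' _ _ p q, ℓ, G => p.openLeafMajor ℓ G ∨ (q.openLeafMajor ℓ G ∧ ℓ ≠ ℓ')
  | .orI₂ ℓ' _ _ p q, ℓ, G => p.openLeafMajor ℓ G ∨ (q.openLeafMajor ℓ G ∧ ℓ ≠ ℓ')
  | .orE ℓA ℓB _ _ p q r, ℓ, G =>
      p = .ass ℓ G ∨ p.openLeafMajor ℓ G ∨ (q.openLeafMajor ℓ G ∧ ℓ ≠ ℓA) ∨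
        (r.openLeafMajor ℓ G ∧ ℓ ≠ ℓB)
  | .impI ℓ' _ _ p q, ℓ, G => p.openLeafMajor ℓ G ∨ (q.openLeafMajor ℓ G ∧ ℓ ≠ ℓ')
  | .tr ℓA ℓAB _ _ p q, ℓ, G =>
      (p.openLeafMajor ℓ G ∧ ℓ ≠ ℓA) ∨ (q.openLeafMajor ℓ G ∧ ℓ ≠ ℓAB)
  | .impE ℓ' _ _ p q r, ℓ, G =>
      p = .ass ℓ G ∨ p.openLeafMajor ℓ G ∨ q.openLeafMajor ℓ G ∨
        (r.openLeafMajor ℓ G ∧ ℓ ≠ ℓ')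
  | .negI ℓA ℓnA _ p q, ℓ, G =>
      (p.openLeafMajor ℓ G ∧ ℓ ≠ ℓA) ∨ (q.openLeafMajor ℓ G ∧ ℓ ≠ ℓnA)
  | .negE _ _ p q, ℓ, G => p = .ass ℓ G ∨ p.openLeafMajor ℓ G ∨ q.openLeafMajor ℓ G

/-- `d` contains a *maximal formula*: an occurrence of `A∗B` (or `¬A`) that is
the major premise of an application of `∗E` and at the same time the major
assumption discharged by an application of an introduction rule for `∗`
(`⊃I` or `TR` in case `∗` is `⊃`). -/
def hasMaxFormula : PT → Prop
  | .ass _ _ => False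
  | .andI ℓ A B p q r => p.hasMaxFormula ∨ q.hasMaxFormula ∨ r.hasMaxFormula ∨
      r.openLeafMajor ℓ (Formula.conj A B)
  | .andE _ _ _ _ p q => p.hasMaxFormula ∨ q.hasMaxFormula
  | .orI₁ ℓ A B p q => p.hasMaxFormula ∨ q.hasMaxFormula ∨
      q.openLeafMajor ℓ (Formula.disj A B)
  | .orI₂ ℓ A B p q => p.hasMaxFormula ∨ q.hasMaxFormula ∨
      q.openLeafMajor ℓ (Formula.disj A B)
  | .orE _ _ _ _ p q r => p.hasMaxFormula ∨ q.hasMaxFormula ∨ r.hasMaxFormula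
  | .impI ℓ A B p q => p.hasMaxFormula ∨ q.hasMaxFormula ∨
      q.openLeafMajor ℓ (Formula.imp A B)
  | .tr _ ℓAB A B p q => p.hasMaxFormula ∨ q.hasMaxFormula ∨
      q.openLeafMajor ℓAB (Formula.imp A B)
  | .impE _ _ _ p q r => p.hasMaxFormula ∨ q.hasMaxFormula ∨ r.hasMaxFormula
  | .negI _ ℓnA A p q => p.hasMaxFormula ∨ q.hasMaxFormula ∨
      q.openLeafMajor ℓnA (Formula.neg A)
  | .negE _ _ p q => p.hasMaxFormula ∨ q.hasMaxFormula

/-- The deduction is a single assumption occurrence. -/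
def isAss : PT → Prop
  | .ass _ _ => True
  | _ => False

/-- `d` contains a *maximal segment*: a segment — a sequence of occurrences of
one and the same formula, each member being an arbitrary premise of a rule
application whose conclusion is the next member, starting either with an
assumption discharged as an arbitrary premise or with the conclusion of `¬E` —
whose last formula is the major premise of an elimination rule.  Since the
conclusion of every rule application of **C** is either the conclusion of `¬E`
or (an occurrence of the same formula as) one of its arbitrary premises, a
maximal segment occurs exactly when the major premise of some elimination rule
is the conclusion of a rule application, i.e. not an assumption. -/
def hasMaxSegment : PT → Prop
  | .ass _ _ => False
  | .andI _ _ _ p q r => p.hasMaxSegment ∨ q.hasMaxSegment ∨ r.hasMaxSegment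
  | .andE _ _ _ _ p q => ¬ p.isAss ∨ p.hasMaxSegment ∨ q.hasMaxSegment
  | .orI₁ _ _ _ p q => p.hasMaxSegment ∨ q.hasMaxSegment
  | .orI₂ _ _ _ p q => p.hasMaxSegment ∨ q.hasMaxSegment
  | .orE _ _ _ _ p q r =>
      ¬ p.isAss ∨ p.hasMaxSegment ∨ q.hasMaxSegment ∨ r.hasMaxSegment
  | .impI _ _ _ p q => p.hasMaxSegment ∨ q.hasMaxSegment
  | .tr _ _ _ _ p q => p.hasMaxSegment ∨ q.hasMaxSegment
  | .impE _ _ _ p q r =>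
      ¬ p.isAss ∨ p.hasMaxSegment ∨ q.hasMaxSegment ∨ r.hasMaxSegment
  | .negI _ _ _ p q => p.hasMaxSegment ∨ q.hasMaxSegment
  | .negE _ _ p q => ¬ p.isAss ∨ p.hasMaxSegment ∨ q.hasMaxSegment

/-- A deduction is in *normal form* if it contains neither maximal formulas
nor maximal segments. -/
def normal (d : PT) : Prop := ¬ d.hasMaxFormula ∧ ¬ d.hasMaxSegment

end PT
/-- `Subf A B`: `A` is a subformula of `B`. -/
inductive Subf : Formula → Formula → Prop
  | refl (A : Formula) : Subf A A
  | neg {F A : Formula} : Subf F A → Subf F (Formula.neg A)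
  | conjL {F A B : Formula} : Subf F A → Subf F (Formula.conj A B)
  | conjR {F A B : Formula} : Subf F B → Subf F (Formula.conj A B)
  | disjL {F A B : Formula} : Subf F A → Subf F (Formula.disj A B)
  | disjR {F A B : Formula} : Subf F B → Subf F (Formula.disj A B)
  | impL {F A B : Formula} : Subf F A → Subf F (Formula.imp A B)
  | impR {F A B : Formula} : Subf F B → Subf F (Formula.imp A B)

namespace PT

/-- The multiset of all formula occurrences in a deduction: every occurrence
in a deduction is either an assumption (a leaf) or the conclusion of some rule
application (the root of a subdeduction). -/
def formulas : PT → Multiset Formula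
  | .ass _ A => {A}
  | .andI ℓ A B p q r =>
      (PT.andI ℓ A B p q r).concl ::ₘ (p.formulas + q.formulas + r.formulas)
  | .andE ℓA ℓB A B p q =>
      (PT.andE ℓA ℓB A B p q).concl ::ₘ (p.formulas + q.formulas)
  | .orI₁ ℓ A B p q => (PT.orI₁ ℓ A B p q).concl ::ₘ (p.formulas + q.formulas)
  | .orI₂ ℓ A B p q => (PT.orI₂ ℓ A B p q).concl ::ₘ (p.formulas + q.formulas)
  | .orE ℓA ℓB A B p q r =>
      (PT.orE ℓA ℓB A B p q r).concl ::ₘ (p.formulas + q.formulas + r.formulas)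
  | .impI ℓ A B p q => (PT.impI ℓ A B p q).concl ::ₘ (p.formulas + q.formulas)
  | .tr ℓA ℓAB A B p q =>
      (PT.tr ℓA ℓAB A B p q).concl ::ₘ (p.formulas + q.formulas)
  | .impE ℓ A B p q r =>
      (PT.impE ℓ A B p q r).concl ::ₘ (p.formulas + q.formulas + r.formulas)
  | .negI ℓA ℓnA A p q =>
      (PT.negI ℓA ℓnA A p q).concl ::ₘ (p.formulas + q.formulas)
  | .negE A C p q => C ::ₘ (p.formulas + q.formulas)

/-- A deduction has the *subformula property* if every formula occurring in it
is a subformula of its conclusion or of one of its undischarged assumptions. -/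
def subformulaProperty (d : PT) : Prop :=
  ∀ F ∈ d.formulas, Subf F d.concl ∨ ∃ G ∈ d.assumptions, Subf F G

end PT

section SubformulaProof

theorem subf_trans {A B C : Formula} (h1 : Subf A B) (h2 : Subf B C) : Subf A C := by
  induction h2 with
  | refl => exact h1
  | neg _ ih => exact Subf.neg ih
  | conjL _ ih => exact Subf.conjL ih
  | conjR _ ih => exact Subf.conjR ih
  | disjL _ ih => exact Subf.disjL ih
  | disjR _ ih => exact Subf.disjR ih
  | impL _ ih => exact Subf.impL ih
  | impR _ ih => exact Subf.impR ih

/-- `F` is a subformula of the conclusion of `d`, or of an open assumption of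
`d` that occurs as major premise of an elimination rule. -/
abbrev POK (d : PT) (F : Formula) : Prop :=
  Subf F d.concl ∨ ∃ ℓ G, (ℓ, G) ∈ d.openAss ∧ Subf F G ∧ d.openLeafMajor ℓ G

theorem POK.mono {d : PT} {F F' : Formula} (h : Subf F F') (h2 : POK d F') :
    POK d F := by
  rcases h2 with h2 | ⟨ℓ, G, hm, hs, hj⟩
  · exact Or.inl (subf_trans h h2)
  · exact Or.inr ⟨ℓ, G, hm, subf_trans h hs, hj⟩

theorem isAss_elim {p : PT} (h : p.isAss) : ∃ m A, p = PT.ass m A := by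
  cases p
  case ass m A => exact ⟨m, A, rfl⟩
  all_goals exact h.elim

theorem main_invariant : ∀ d : PT, d.wf → ¬ d.hasMaxFormula → ¬ d.hasMaxSegment →
    (∀ ℓ G, (ℓ, G) ∈ d.openAss → ¬ d.openLeafMajor ℓ G → POK d G) ∧
    (∀ F ∈ d.formulas, POK d F) := by
  intro d
  induction d with
  | ass ℓ A =>
      intro _ _ _
      constructor
      · intro ℓ₀ G hG _
        simp only [PT.openAss, Multiset.mem_singleton, Prod.mk.injEq] at hG
        exact Or.inl (hG.2 ▸ Subf.refl _)
      · intro F hF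
        simp only [PT.formulas, Multiset.mem_singleton] at hF
        subst hF
        exact Or.inl (Subf.refl _)
  | andI ℓ A B p q r ihp ihq ihr =>
      intro hw h1 h2
      simp only [PT.wf] at hw
      obtain ⟨hwp, hwq, hwr, hcp, hcq, hall, hmem⟩ := hw
      simp only [PT.hasMaxFormula, not_or] at h1
      obtain ⟨h1p, h1q, h1r, h1m⟩ := h1
      simp only [PT.hasMaxSegment, not_or] at h2
      obtain ⟨h2p, h2q, h2r⟩ := h2
      obtain ⟨Qp, Pp⟩ := ihp hwp h1p h2p
      obtain ⟨Qq, Pq⟩ := ihq hwq h1q h2q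
      obtain ⟨Qr, Pr⟩ := ihr hwr h1r h2r
      have liftr : ∀ F, POK r F → POK (PT.andI ℓ A B p q r) F := by
        rintro F (h | ⟨ℓ', G', hm, hs, hj⟩)
        · exact Or.inl h
        · by_cases hℓ : ℓ' = ℓ
          · subst hℓ
            rw [hall G' hm] at hj
            exact absurd hj h1m
          · refine Or.inr ⟨ℓ', G', ?_, hs, Or.inr (Or.inr ⟨hj, hℓ⟩)⟩
            simp only [PT.openAss, Multiset.mem_add, Multiset.mem_filter]
            exact Or.inr ⟨hm, hℓ⟩
      have hOKc : POK (PT.andI ℓ A B p q r) (Formula.conj A B) :=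
        liftr _ (Qr ℓ _ hmem h1m)
      have liftp : ∀ F, POK p F → POK (PT.andI ℓ A B p q r) F := by
        rintro F (h | ⟨ℓ', G', hm, hs, hj⟩)
        · rw [hcp] at h
          exact POK.mono (Subf.conjL h) hOKc
        · refine Or.inr ⟨ℓ', G', ?_, hs, Or.inl hj⟩
          simp only [PT.openAss, Multiset.mem_add]
          exact Or.inl (Or.inl hm)
      have liftq : ∀ F, POK q F → POK (PT.andI ℓ A B p q r) F := by
        rintro F (h | ⟨ℓ', G', hm, hs, hj⟩)
        · rw [hcq] at h
          exact POK.mono (Subf.conjR h) hOKc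
        · refine Or.inr ⟨ℓ', G', ?_, hs, Or.inr (Or.inl hj)⟩
          simp only [PT.openAss, Multiset.mem_add]
          exact Or.inl (Or.inr hm)
      constructor
      · intro ℓ₀ G hG hnm
        simp only [PT.openLeafMajor, not_or] at hnm
        obtain ⟨np, nq, nr⟩ := hnm
        simp only [PT.openAss, Multiset.mem_add, Multiset.mem_filter] at hG
        rcases hG with (hG | hG) | ⟨hG, hne⟩
        · exact liftp _ (Qp _ _ hG np)
        · exact liftq _ (Qq _ _ hG nq)
        · exact liftr _ (Qr _ _ hG (fun h => nr ⟨h, hne⟩))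
      · intro F hF
        simp only [PT.formulas, PT.concl, Multiset.mem_cons, Multiset.mem_add] at hF
        rcases hF with hF | (hF | hF) | hF
        · subst hF; exact Or.inl (Subf.refl _)
        · exact liftp _ (Pp F hF)
        · exact liftq _ (Pq F hF)
        · exact liftr _ (Pr F hF)
  | orI₁ ℓ A B p q ihp ihq =>
      intro hw h1 h2
      simp only [PT.wf] at hw
      obtain ⟨hwp, hwq, hcp, hall, hmem⟩ := hw
      simp only [PT.hasMaxFormula, not_or] at h1
      obtain ⟨h1p, h1q, h1m⟩ := h1
      simp only [PT.hasMaxSegment, not_or] at h2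
      obtain ⟨h2p, h2q⟩ := h2
      obtain ⟨Qp, Pp⟩ := ihp hwp h1p h2p
      obtain ⟨Qq, Pq⟩ := ihq hwq h1q h2q
      have liftq : ∀ F, POK q F → POK (PT.orI₁ ℓ A B p q) F := by
        rintro F (h | ⟨ℓ', G', hm, hs, hj⟩)
        · exact Or.inl h
        · by_cases hℓ : ℓ' = ℓ
          · subst hℓ
            rw [hall G' hm] at hj
            exact absurd hj h1m
          · refine Or.inr ⟨ℓ', G', ?_, hs, Or.inr ⟨hj, hℓ⟩⟩
            simp only [PT.openAss, Multiset.mem_add, Multiset.mem_filter]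
            exact Or.inr ⟨hm, hℓ⟩
      have hOKc : POK (PT.orI₁ ℓ A B p q) (Formula.disj A B) :=
        liftq _ (Qq ℓ _ hmem h1m)
      have liftp : ∀ F, POK p F → POK (PT.orI₁ ℓ A B p q) F := by
        rintro F (h | ⟨ℓ', G', hm, hs, hj⟩)
        · rw [hcp] at h
          exact POK.mono (Subf.disjL h) hOKc
        · refine Or.inr ⟨ℓ', G', ?_, hs, Or.inl hj⟩
          simp only [PT.openAss, Multiset.mem_add]
          exact Or.inl hm
      constructor
      · intro ℓ₀ G hG hnm
        simp only [PT.openLeafMajor, not_or] at hnm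
        obtain ⟨np, nq⟩ := hnm
        simp only [PT.openAss, Multiset.mem_add, Multiset.mem_filter] at hG
        rcases hG with hG | ⟨hG, hne⟩
        · exact liftp _ (Qp _ _ hG np)
        · exact liftq _ (Qq _ _ hG (fun h => nq ⟨h, hne⟩))
      · intro F hF
        simp only [PT.formulas, PT.concl, Multiset.mem_cons, Multiset.mem_add] at hF
        rcases hF with hF | hF | hF
        · subst hF; exact Or.inl (Subf.refl _)
        · exact liftp _ (Pp F hF)
        · exact liftq _ (Pq F hF)
  | orI₂ ℓ A B p q ihp ihq =>
      intro hw h1 h2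
      simp only [PT.wf] at hw
      obtain ⟨hwp, hwq, hcp, hall, hmem⟩ := hw
      simp only [PT.hasMaxFormula, not_or] at h1
      obtain ⟨h1p, h1q, h1m⟩ := h1
      simp only [PT.hasMaxSegment, not_or] at h2
      obtain ⟨h2p, h2q⟩ := h2
      obtain ⟨Qp, Pp⟩ := ihp hwp h1p h2p
      obtain ⟨Qq, Pq⟩ := ihq hwq h1q h2q
      have liftq : ∀ F, POK q F → POK (PT.orI₂ ℓ A B p q) F := by
        rintro F (h | ⟨ℓ', G', hm, hs, hj⟩)
        · exact Or.inl h
        · by_cases hℓ : ℓ' = ℓ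
          · subst hℓ
            rw [hall G' hm] at hj
            exact absurd hj h1m
          · refine Or.inr ⟨ℓ', G', ?_, hs, Or.inr ⟨hj, hℓ⟩⟩
            simp only [PT.openAss, Multiset.mem_add, Multiset.mem_filter]
            exact Or.inr ⟨hm, hℓ⟩
      have hOKc : POK (PT.orI₂ ℓ A B p q) (Formula.disj A B) :=
        liftq _ (Qq ℓ _ hmem h1m)
      have liftp : ∀ F, POK p F → POK (PT.orI₂ ℓ A B p q) F := by
        rintro F (h | ⟨ℓ', G', hm, hs, hj⟩)
        · rw [hcp] at h
          exact POK.mono (Subf.disjR h) hOKc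
        · refine Or.inr ⟨ℓ', G', ?_, hs, Or.inl hj⟩
          simp only [PT.openAss, Multiset.mem_add]
          exact Or.inl hm
      constructor
      · intro ℓ₀ G hG hnm
        simp only [PT.openLeafMajor, not_or] at hnm
        obtain ⟨np, nq⟩ := hnm
        simp only [PT.openAss, Multiset.mem_add, Multiset.mem_filter] at hG
        rcases hG with hG | ⟨hG, hne⟩
        · exact liftp _ (Qp _ _ hG np)
        · exact liftq _ (Qq _ _ hG (fun h => nq ⟨h, hne⟩))
      · intro F hF
        simp only [PT.formulas, PT.concl, Multiset.mem_cons, Multiset.mem_add] at hF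
        rcases hF with hF | hF | hF
        · subst hF; exact Or.inl (Subf.refl _)
        · exact liftp _ (Pp F hF)
        · exact liftq _ (Pq F hF)
  | impI ℓ A B p q ihp ihq =>
      intro hw h1 h2
      simp only [PT.wf] at hw
      obtain ⟨hwp, hwq, hcp, hall, hmem⟩ := hw
      simp only [PT.hasMaxFormula, not_or] at h1
      obtain ⟨h1p, h1q, h1m⟩ := h1
      simp only [PT.hasMaxSegment, not_or] at h2
      obtain ⟨h2p, h2q⟩ := h2
      obtain ⟨Qp, Pp⟩ := ihp hwp h1p h2p
      obtain ⟨Qq, Pq⟩ := ihq hwq h1q h2q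
      have liftq : ∀ F, POK q F → POK (PT.impI ℓ A B p q) F := by
        rintro F (h | ⟨ℓ', G', hm, hs, hj⟩)
        · exact Or.inl h
        · by_cases hℓ : ℓ' = ℓ
          · subst hℓ
            rw [hall G' hm] at hj
            exact absurd hj h1m
          · refine Or.inr ⟨ℓ', G', ?_, hs, Or.inr ⟨hj, hℓ⟩⟩
            simp only [PT.openAss, Multiset.mem_add, Multiset.mem_filter]
            exact Or.inr ⟨hm, hℓ⟩
      have hOKc : POK (PT.impI ℓ A B p q) (Formula.imp A B) :=
        liftq _ (Qq ℓ _ hmem h1m)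
      have liftp : ∀ F, POK p F → POK (PT.impI ℓ A B p q) F := by
        rintro F (h | ⟨ℓ', G', hm, hs, hj⟩)
        · rw [hcp] at h
          exact POK.mono (Subf.impR h) hOKc
        · refine Or.inr ⟨ℓ', G', ?_, hs, Or.inl hj⟩
          simp only [PT.openAss, Multiset.mem_add]
          exact Or.inl hm
      constructor
      · intro ℓ₀ G hG hnm
        simp only [PT.openLeafMajor, not_or] at hnm
        obtain ⟨np, nq⟩ := hnm
        simp only [PT.openAss, Multiset.mem_add, Multiset.mem_filter] at hG
        rcases hG with hG | ⟨hG, hne⟩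
        · exact liftp _ (Qp _ _ hG np)
        · exact liftq _ (Qq _ _ hG (fun h => nq ⟨h, hne⟩))
      · intro F hF
        simp only [PT.formulas, PT.concl, Multiset.mem_cons, Multiset.mem_add] at hF
        rcases hF with hF | hF | hF
        · subst hF; exact Or.inl (Subf.refl _)
        · exact liftp _ (Pp F hF)
        · exact liftq _ (Pq F hF)
  | tr ℓA ℓAB A B p q ihp ihq =>
      intro hw h1 h2
      simp only [PT.wf] at hw
      obtain ⟨hwp, hwq, hpq, hallA, hmemA, hallAB, hmemAB⟩ := hw
      simp only [PT.hasMaxFormula, not_or] at h1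
      obtain ⟨h1p, h1q, h1m⟩ := h1
      simp only [PT.hasMaxSegment, not_or] at h2
      obtain ⟨h2p, h2q⟩ := h2
      obtain ⟨Qp, Pp⟩ := ihp hwp h1p h2p
      obtain ⟨Qq, Pq⟩ := ihq hwq h1q h2q
      have liftq : ∀ F, POK q F → POK (PT.tr ℓA ℓAB A B p q) F := by
        rintro F (h | ⟨ℓ', G', hm, hs, hj⟩)
        · refine Or.inl ?_
          show Subf F p.concl
          rw [hpq]; exact h
        · by_cases hℓ : ℓ' = ℓAB
          · subst hℓ
            rw [hallAB G' hm] at hj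
            exact absurd hj h1m
          · refine Or.inr ⟨ℓ', G', ?_, hs, Or.inr ⟨hj, hℓ⟩⟩
            simp only [PT.openAss, Multiset.mem_add, Multiset.mem_filter]
            exact Or.inr ⟨hm, hℓ⟩
      have hOKi : POK (PT.tr ℓA ℓAB A B p q) (Formula.imp A B) :=
        liftq _ (Qq ℓAB _ hmemAB h1m)
      have liftp : ∀ F, POK p F → POK (PT.tr ℓA ℓAB A B p q) F := by
        rintro F (h | ⟨ℓ', G', hm, hs, hj⟩)
        · exact Or.inl h
        · by_cases hℓ : ℓ' = ℓA
          · subst hℓ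
            rw [hallA G' hm] at hs
            exact POK.mono (Subf.impL hs) hOKi
          · refine Or.inr ⟨ℓ', G', ?_, hs, Or.inl ⟨hj, hℓ⟩⟩
            simp only [PT.openAss, Multiset.mem_add, Multiset.mem_filter]
            exact Or.inl ⟨hm, hℓ⟩
      constructor
      · intro ℓ₀ G hG hnm
        simp only [PT.openLeafMajor, not_or] at hnm
        obtain ⟨np, nq⟩ := hnm
        simp only [PT.openAss, Multiset.mem_add, Multiset.mem_filter] at hG
        rcases hG with ⟨hG, hne⟩ | ⟨hG, hne⟩
        · exact liftp _ (Qp _ _ hG (fun h => np ⟨h, hne⟩))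
        · exact liftq _ (Qq _ _ hG (fun h => nq ⟨h, hne⟩))
      · intro F hF
        simp only [PT.formulas, PT.concl, Multiset.mem_cons, Multiset.mem_add] at hF
        rcases hF with hF | hF | hF
        · subst hF; exact Or.inl (Subf.refl _)
        · exact liftp _ (Pp F hF)
        · exact liftq _ (Pq F hF)
  | negI ℓA ℓnA A p q ihp ihq =>
      intro hw h1 h2
      simp only [PT.wf] at hw
      obtain ⟨hwp, hwq, hpq, hallA, hmemA, hallnA, hmemnA⟩ := hw
      simp only [PT.hasMaxFormula, not_or] at h1
      obtain ⟨h1p, h1q, h1m⟩ := h1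
      simp only [PT.hasMaxSegment, not_or] at h2
      obtain ⟨h2p, h2q⟩ := h2
      obtain ⟨Qp, Pp⟩ := ihp hwp h1p h2p
      obtain ⟨Qq, Pq⟩ := ihq hwq h1q h2q
      have liftq : ∀ F, POK q F → POK (PT.negI ℓA ℓnA A p q) F := by
        rintro F (h | ⟨ℓ', G', hm, hs, hj⟩)
        · refine Or.inl ?_
          show Subf F p.concl
          rw [hpq]; exact h
        · by_cases hℓ : ℓ' = ℓnA
          · subst hℓ
            rw [hallnA G' hm] at hj
            exact absurd hj h1m
          · refine Or.inr ⟨ℓ', G', ?_, hs, Or.inr ⟨hj, hℓ⟩⟩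
            simp only [PT.openAss, Multiset.mem_add, Multiset.mem_filter]
            exact Or.inr ⟨hm, hℓ⟩
      have hOKn : POK (PT.negI ℓA ℓnA A p q) (Formula.neg A) :=
        liftq _ (Qq ℓnA _ hmemnA h1m)
      have liftp : ∀ F, POK p F → POK (PT.negI ℓA ℓnA A p q) F := by
        rintro F (h | ⟨ℓ', G', hm, hs, hj⟩)
        · exact Or.inl h
        · by_cases hℓ : ℓ' = ℓA
          · subst hℓ
            rw [hallA G' hm] at hs
            exact POK.mono (Subf.neg hs) hOKn
          · refine Or.inr ⟨ℓ', G', ?_, hs, Or.inl ⟨hj, hℓ⟩⟩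
            simp only [PT.openAss, Multiset.mem_add, Multiset.mem_filter]
            exact Or.inl ⟨hm, hℓ⟩
      constructor
      · intro ℓ₀ G hG hnm
        simp only [PT.openLeafMajor, not_or] at hnm
        obtain ⟨np, nq⟩ := hnm
        simp only [PT.openAss, Multiset.mem_add, Multiset.mem_filter] at hG
        rcases hG with ⟨hG, hne⟩ | ⟨hG, hne⟩
        · exact liftp _ (Qp _ _ hG (fun h => np ⟨h, hne⟩))
        · exact liftq _ (Qq _ _ hG (fun h => nq ⟨h, hne⟩))
      · intro F hF
        simp only [PT.formulas, PT.concl, Multiset.mem_cons, Multiset.mem_add] at hF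
        rcases hF with hF | hF | hF
        · subst hF; exact Or.inl (Subf.refl _)
        · exact liftp _ (Pp F hF)
        · exact liftq _ (Pq F hF)
  | andE ℓA ℓB A B p q ihp ihq =>
      intro hw h1 h2
      simp only [PT.hasMaxSegment, not_or, not_not] at h2
      obtain ⟨hpass, h2p, h2q⟩ := h2
      obtain ⟨m, M, rfl⟩ := isAss_elim hpass
      simp only [PT.wf] at hw
      obtain ⟨hwp, hwq, hcp, hallA, hallB, -⟩ := hw
      have hM : M = Formula.conj A B := hcp
      subst hM
      simp only [PT.hasMaxFormula, not_or] at h1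
      obtain ⟨h1p, h1q⟩ := h1
      obtain ⟨Qq, Pq⟩ := ihq hwq h1q h2q
      have hmemM : (m, Formula.conj A B) ∈
          (PT.andE ℓA ℓB A B (PT.ass m (Formula.conj A B)) q).openAss := by
        simp only [PT.openAss, Multiset.mem_add, Multiset.mem_singleton]
        exact Or.inl trivial
      have hmajM : (PT.andE ℓA ℓB A B (PT.ass m (Formula.conj A B)) q).openLeafMajor
          m (Formula.conj A B) := Or.inl rfl
      have hOKc : POK (PT.andE ℓA ℓB A B (PT.ass m (Formula.conj A B)) q)
          (Formula.conj A B) := Or.inr ⟨m, _, hmemM, Subf.refl _, hmajM⟩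
      have liftq : ∀ F, POK q F →
          POK (PT.andE ℓA ℓB A B (PT.ass m (Formula.conj A B)) q) F := by
        rintro F (h | ⟨ℓ', G', hm, hs, hj⟩)
        · exact Or.inl h
        · by_cases hA : ℓ' = ℓA
          · subst hA
            rw [hallA G' hm] at hs
            exact POK.mono (Subf.conjL hs) hOKc
          · by_cases hB : ℓ' = ℓB
            · subst hB
              rw [hallB G' hm] at hs
              exact POK.mono (Subf.conjR hs) hOKc
            · refine Or.inr ⟨ℓ', G', ?_, hs, Or.inr (Or.inr ⟨hj, hA, hB⟩)⟩
              simp only [PT.openAss, Multiset.mem_add, Multiset.mem_filter]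
              exact Or.inr ⟨hm, hA, hB⟩
      constructor
      · intro ℓ₀ G hG hnm
        simp only [PT.openAss, Multiset.mem_add, Multiset.mem_filter,
          Multiset.mem_singleton] at hG
        rcases hG with hG | ⟨hG, hA, hB⟩
        · cases hG
          exact absurd (Or.inl rfl) hnm
        · exact liftq _ (Qq _ _ hG (fun h => hnm (Or.inr (Or.inr ⟨h, hA, hB⟩))))
      · intro F hF
        simp only [PT.formulas, PT.concl, Multiset.mem_cons, Multiset.mem_add,
          Multiset.mem_singleton] at hF
        rcases hF with hF | hF | hF
        · subst hF; exact Or.inl (Subf.refl _)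
        · subst hF; exact hOKc
        · exact liftq _ (Pq F hF)
  | orE ℓA ℓB A B p q r ihp ihq ihr =>
      intro hw h1 h2
      simp only [PT.hasMaxSegment, not_or, not_not] at h2
      obtain ⟨hpass, h2p, h2q, h2r⟩ := h2
      obtain ⟨m, M, rfl⟩ := isAss_elim hpass
      simp only [PT.wf] at hw
      obtain ⟨hwp, hwq, hwr, hcp, hqr, hallA, hmemA, hallB, hmemB⟩ := hw
      have hM : M = Formula.disj A B := hcp
      subst hM
      simp only [PT.hasMaxFormula, not_or] at h1
      obtain ⟨h1p, h1q, h1r⟩ := h1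
      obtain ⟨Qq, Pq⟩ := ihq hwq h1q h2q
      obtain ⟨Qr, Pr⟩ := ihr hwr h1r h2r
      have hmemM : (m, Formula.disj A B) ∈
          (PT.orE ℓA ℓB A B (PT.ass m (Formula.disj A B)) q r).openAss := by
        simp only [PT.openAss, Multiset.mem_add, Multiset.mem_singleton]
        exact Or.inl (Or.inl trivial)
      have hmajM : (PT.orE ℓA ℓB A B (PT.ass m (Formula.disj A B)) q r).openLeafMajor
          m (Formula.disj A B) := Or.inl rfl
      have hOKd : POK (PT.orE ℓA ℓB A B (PT.ass m (Formula.disj A B)) q r)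
          (Formula.disj A B) := Or.inr ⟨m, _, hmemM, Subf.refl _, hmajM⟩
      have liftq : ∀ F, POK q F →
          POK (PT.orE ℓA ℓB A B (PT.ass m (Formula.disj A B)) q r) F := by
        rintro F (h | ⟨ℓ', G', hm, hs, hj⟩)
        · exact Or.inl h
        · by_cases hA : ℓ' = ℓA
          · subst hA
            rw [hallA G' hm] at hs
            exact POK.mono (Subf.disjL hs) hOKd
          · refine Or.inr ⟨ℓ', G', ?_, hs, Or.inr (Or.inr (Or.inl ⟨hj, hA⟩))⟩
            simp only [PT.openAss, Multiset.mem_add, Multiset.mem_filter]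
            exact Or.inl (Or.inr ⟨hm, hA⟩)
      have liftr : ∀ F, POK r F →
          POK (PT.orE ℓA ℓB A B (PT.ass m (Formula.disj A B)) q r) F := by
        rintro F (h | ⟨ℓ', G', hm, hs, hj⟩)
        · refine Or.inl ?_
          show Subf F q.concl
          rw [hqr]; exact h
        · by_cases hB : ℓ' = ℓB
          · subst hB
            rw [hallB G' hm] at hs
            exact POK.mono (Subf.disjR hs) hOKd
          · refine Or.inr ⟨ℓ', G', ?_, hs, Or.inr (Or.inr (Or.inr ⟨hj, hB⟩))⟩
            simp only [PT.openAss, Multiset.mem_add, Multiset.mem_filter]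
            exact Or.inr ⟨hm, hB⟩
      constructor
      · intro ℓ₀ G hG hnm
        simp only [PT.openAss, Multiset.mem_add, Multiset.mem_filter,
          Multiset.mem_singleton] at hG
        rcases hG with (hG | ⟨hG, hA⟩) | ⟨hG, hB⟩
        · cases hG
          exact absurd (Or.inl rfl) hnm
        · exact liftq _ (Qq _ _ hG (fun h => hnm (Or.inr (Or.inr (Or.inl ⟨h, hA⟩)))))
        · exact liftr _ (Qr _ _ hG (fun h => hnm (Or.inr (Or.inr (Or.inr ⟨h, hB⟩)))))
      · intro F hF
        simp only [PT.formulas, PT.concl, Multiset.mem_cons, Multiset.mem_add,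
          Multiset.mem_singleton] at hF
        rcases hF with hF | (hF | hF) | hF
        · subst hF; exact Or.inl (Subf.refl _)
        · subst hF; exact hOKd
        · exact liftq _ (Pq F hF)
        · exact liftr _ (Pr F hF)
  | impE ℓ A B p q r ihp ihq ihr =>
      intro hw h1 h2
      simp only [PT.hasMaxSegment, not_or, not_not] at h2
      obtain ⟨hpass, h2p, h2q, h2r⟩ := h2
      obtain ⟨m, M, rfl⟩ := isAss_elim hpass
      simp only [PT.wf] at hw
      obtain ⟨hwp, hwq, hwr, hcp, hcq, hall, hmem⟩ := hw
      have hM : M = Formula.imp A B := hcp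
      subst hM
      simp only [PT.hasMaxFormula, not_or] at h1
      obtain ⟨h1p, h1q, h1r⟩ := h1
      obtain ⟨Qq, Pq⟩ := ihq hwq h1q h2q
      obtain ⟨Qr, Pr⟩ := ihr hwr h1r h2r
      have hmemM : (m, Formula.imp A B) ∈
          (PT.impE ℓ A B (PT.ass m (Formula.imp A B)) q r).openAss := by
        simp only [PT.openAss, Multiset.mem_add, Multiset.mem_singleton]
        exact Or.inl (Or.inl trivial)
      have hmajM : (PT.impE ℓ A B (PT.ass m (Formula.imp A B)) q r).openLeafMajor
          m (Formula.imp A B) := Or.inl rfl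
      have hOKi : POK (PT.impE ℓ A B (PT.ass m (Formula.imp A B)) q r)
          (Formula.imp A B) := Or.inr ⟨m, _, hmemM, Subf.refl _, hmajM⟩
      have liftq : ∀ F, POK q F →
          POK (PT.impE ℓ A B (PT.ass m (Formula.imp A B)) q r) F := by
        rintro F (h | ⟨ℓ', G', hm, hs, hj⟩)
        · rw [hcq] at h
          exact POK.mono (Subf.impL h) hOKi
        · refine Or.inr ⟨ℓ', G', ?_, hs, Or.inr (Or.inr (Or.inl hj))⟩
          simp only [PT.openAss, Multiset.mem_add]
          exact Or.inl (Or.inr hm)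
      have liftr : ∀ F, POK r F →
          POK (PT.impE ℓ A B (PT.ass m (Formula.imp A B)) q r) F := by
        rintro F (h | ⟨ℓ', G', hm, hs, hj⟩)
        · exact Or.inl h
        · by_cases hℓ : ℓ' = ℓ
          · subst hℓ
            rw [hall G' hm] at hs
            exact POK.mono (Subf.impR hs) hOKi
          · refine Or.inr ⟨ℓ', G', ?_, hs, Or.inr (Or.inr (Or.inr ⟨hj, hℓ⟩))⟩
            simp only [PT.openAss, Multiset.mem_add, Multiset.mem_filter]
            exact Or.inr ⟨hm, hℓ⟩
      constructor
      · intro ℓ₀ G hG hnm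
        simp only [PT.openAss, Multiset.mem_add, Multiset.mem_filter,
          Multiset.mem_singleton] at hG
        rcases hG with (hG | hG) | ⟨hG, hne⟩
        · cases hG
          exact absurd (Or.inl rfl) hnm
        · exact liftq _ (Qq _ _ hG (fun h => hnm (Or.inr (Or.inr (Or.inl h)))))
        · exact liftr _ (Qr _ _ hG (fun h => hnm (Or.inr (Or.inr (Or.inr ⟨h, hne⟩)))))
      · intro F hF
        simp only [PT.formulas, PT.concl, Multiset.mem_cons, Multiset.mem_add,
          Multiset.mem_singleton] at hF
        rcases hF with hF | (hF | hF) | hF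
        · subst hF; exact Or.inl (Subf.refl _)
        · subst hF; exact hOKi
        · exact liftq _ (Pq F hF)
        · exact liftr _ (Pr F hF)
  | negE A C p q ihp ihq =>
      intro hw h1 h2
      simp only [PT.hasMaxSegment, not_or, not_not] at h2
      obtain ⟨hpass, h2p, h2q⟩ := h2
      obtain ⟨m, M, rfl⟩ := isAss_elim hpass
      simp only [PT.wf] at hw
      obtain ⟨hwp, hwq, hcp, hcq⟩ := hw
      have hM : M = Formula.neg A := hcp
      subst hM
      simp only [PT.hasMaxFormula, not_or] at h1
      obtain ⟨h1p, h1q⟩ := h1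
      obtain ⟨Qq, Pq⟩ := ihq hwq h1q h2q
      have hmemM : (m, Formula.neg A) ∈
          (PT.negE A C (PT.ass m (Formula.neg A)) q).openAss := by
        simp only [PT.openAss, Multiset.mem_add, Multiset.mem_singleton]
        exact Or.inl trivial
      have hmajM : (PT.negE A C (PT.ass m (Formula.neg A)) q).openLeafMajor
          m (Formula.neg A) := Or.inl rfl
      have hOKn : POK (PT.negE A C (PT.ass m (Formula.neg A)) q)
          (Formula.neg A) := Or.inr ⟨m, _, hmemM, Subf.refl _, hmajM⟩
      have liftq : ∀ F, POK q F →
          POK (PT.negE A C (PT.ass m (Formula.neg A)) q) F := by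
        rintro F (h | ⟨ℓ', G', hm, hs, hj⟩)
        · rw [hcq] at h
          exact POK.mono (Subf.neg h) hOKn
        · refine Or.inr ⟨ℓ', G', ?_, hs, Or.inr (Or.inr hj)⟩
          simp only [PT.openAss, Multiset.mem_add]
          exact Or.inr hm
      constructor
      · intro ℓ₀ G hG hnm
        simp only [PT.openAss, Multiset.mem_add, Multiset.mem_singleton] at hG
        rcases hG with hG | hG
        · cases hG
          exact absurd (Or.inl rfl) hnm
        · exact liftq _ (Qq _ _ hG (fun h => hnm (Or.inr (Or.inr h))))
      · intro F hF
        simp only [PT.formulas, PT.concl, Multiset.mem_cons, Multiset.mem_add,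
          Multiset.mem_singleton] at hF
        rcases hF with hF | hF | hF
        · subst hF; exact Or.inl (Subf.refl _)
        · subst hF; exact hOKn
        · exact liftq _ (Pq F hF)

end SubformulaProof

/-- Every deduction in normal form in the system C has the
subformula property: every formula occurring in the deduction is a subformula
of the conclusion or of one of the undischarged assumptions. -/
theorem normal_subformula_property (d : PT) (hd : d.wf) (hn : d.normal) :
    d.subformulaProperty := by
  obtain ⟨h1, h2⟩ := hn
  obtain ⟨-, hP⟩ := main_invariant d hd h1 h2
  intro F hF
  rcases hP F hF with h | ⟨ℓ, G, hm, hs, -⟩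
  · exact Or.inl h
  · exact Or.inr ⟨G, ⟨ℓ, hm⟩, hs⟩
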